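/- Suppose for each $\alpha$ the inequality $(\int_M |u|^{2^*} dv_{g_\alpha})^{2/2^*} \le K^2 \int_M |\nabla_{g_\alpha} u|^2 dv_{g_\alpha} + B \int_M u^2 dv_{g_\alpha}$ holds for all $u \in H^2_1(M)$, where $K, B$ are constants independent of $\alpha$, and $g_\alpha \to g$ in the $C^0$-topology. Then the same inequality holds with $g$ in place of $g_\alpha$ for all $u \in H^2_1(M)$. -/
import Mathlib


open MeasureTheory Filter

/-- if for each `α` the sharp Sobolev inequality with constants `K², B`
holds for the metric `g_α`, and `g_α → g` in `C⁰` (so that for each fixed `u` the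
`L^{2*}`-masses, Dirichlet energies `E α u` and `L²`-masses converge to those of `g`),
then the same inequality holds for `g`. -/
theorem stmt_2 {M : Type*} [MeasurableSpace M]
    (μ : ℕ → Measure M) (ν : Measure M)
    (E : ℕ → (M → ℝ) → ℝ) (E₀ : (M → ℝ) → ℝ)
    (n : ℕ) (hn : 3 ≤ n) (K B : ℝ) (hK : 0 < K)
    (q : ℝ) (hq : q = 2 * n / ((n : ℝ) - 2))
    (hC0 : ∀ u : M → ℝ,
      Tendsto (fun α => ∫ x, |u x| ^ q ∂(μ α)) atTop (nhds (∫ x, |u x| ^ q ∂ν)) ∧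
      Tendsto (fun α => E α u) atTop (nhds (E₀ u)) ∧
      Tendsto (fun α => ∫ x, (u x) ^ 2 ∂(μ α)) atTop (nhds (∫ x, (u x) ^ 2 ∂ν)))
    (hineq : ∀ α, ∀ u : M → ℝ,
      (∫ x, |u x| ^ q ∂(μ α)) ^ (2 / q) ≤
        K ^ 2 * E α u + B * ∫ x, (u x) ^ 2 ∂(μ α)) :
    ∀ u : M → ℝ,
      (∫ x, |u x| ^ q ∂ν) ^ (2 / q) ≤ K ^ 2 * E₀ u + B * ∫ x, (u x) ^ 2 ∂ν := by
  intro u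
  obtain ⟨h1, h2, h3⟩ := hC0 u
  have hq0 : 0 < q := by
    have h3 : (3:ℝ) ≤ n := by exact_mod_cast hn
    rw [hq]
    apply div_pos <;> linarith
  have hLHS : Tendsto (fun α => (∫ x, |u x| ^ q ∂(μ α)) ^ (2 / q)) atTop
      (nhds ((∫ x, |u x| ^ q ∂ν) ^ (2 / q))) := by
    exact (Real.continuousAt_rpow_const _ _ (Or.inr (by positivity))).tendsto.comp h1
  have hRHS : Tendsto (fun α => K ^ 2 * E α u + B * ∫ x, (u x) ^ 2 ∂(μ α)) atTop
      (nhds (K ^ 2 * E₀ u + B * ∫ x, (u x) ^ 2 ∂ν)) :=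
    ((h2.const_mul _).add (h3.const_mul _))
  exact le_of_tendsto_of_tendsto' hLHS hRHS (fun α => hineq α u)
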